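/- Let X be a T1 topological space and let f : 𝕊 → X be a continuous open surjection from the Sorgenfrey line onto X whose weight is uncountable (X is not second countable). For rationals a < b, let P_{a,b} := { x ∈ [a, b) : for all y ∈ [a, b), f(y) = f(x) implies y = x }. Then there exist rationals a < b such that P_{a,b} is uncountable. -/

import Mathlib

open Set Filter Topology Function

/-- The Sorgenfrey line: the real line as a type synonym. -/
def SorgenfreyLine : Type := ℝ

notation "𝕊" => SorgenfreyLine

noncomputable instance : LinearOrder 𝕊 := inferInstanceAs (LinearOrder ℝ)
instance : RatCast 𝕊 := inferInstanceAs (RatCast ℝ)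

/-- The topology on the Sorgenfrey line, generated by half-open intervals `[a, b)`, `a < b`. -/
instance : TopologicalSpace 𝕊 :=
  TopologicalSpace.generateFrom {s : Set 𝕊 | ∃ a b : 𝕊, a < b ∧ s = Set.Ico a b}

/-- `Pab f a b` is the set of points `x ∈ [a, b)` that are the unique point of `[a, b)`
mapped by `f` to `f x`. -/
def Pab {X : Type*} (f : 𝕊 → X) (a b : 𝕊) : Set 𝕊 :=
  {x | x ∈ Set.Ico a b ∧ ∀ y ∈ Set.Ico a b, f y = f x → y = x}

/-! If every `P_{a,b}` were countable, their union `D` would be countable. A fiber of `f` that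
misses `D` has, read in `ℝ`, no isolated points, so its closure is a nonempty perfect set and hence
uncountable; as only countably many points of a subset of `ℝ` are isolated from the right, the fiber
has a point `z` that is a limit of the fiber from the right (here one uses that the fiber is closed
in `𝕊`). Then every neighbourhood `f [z, b)` of `f z` contains some `f [q₁, q₂)` with `q₁, q₂`
rational and `f z ∈ f [q₁, q₂)`, while fibers meeting `D` are handled by the sets `f [d, q)`,
`d ∈ D`. These countably many open sets form a base of `X`. -/

open TopologicalSpace

namespace SorgenfreyLine

theorem isTopologicalBasis_Ico :
    IsTopologicalBasis {s : Set 𝕊 | ∃ a b : 𝕊, a < b ∧ s = Ico a b} where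
  exists_subset_inter := by
    rintro _ ⟨a, b, -, rfl⟩ _ ⟨c, d, -, rfl⟩ x ⟨⟨hax, hxb⟩, hcx, hxd⟩
    refine ⟨Ico x (min b d), ⟨x, _, lt_min hxb hxd, rfl⟩, ⟨le_rfl, lt_min hxb hxd⟩, ?_⟩
    exact fun y ⟨hxy, hy⟩ => ⟨⟨hax.trans hxy, hy.trans_le (min_le_left _ _)⟩,
      hcx.trans hxy, hy.trans_le (min_le_right _ _)⟩
  sUnion_eq := eq_univ_of_forall fun x =>
    let ⟨b, hxb⟩ := exists_gt (α := ℝ) x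
    ⟨Ico x b, ⟨x, b, hxb, rfl⟩, le_rfl, hxb⟩
  eq_generateFrom := rfl

theorem isOpen_Ico (a b : 𝕊) : IsOpen (Ico a b) := by
  rcases lt_or_ge a b with hab | hba
  · exact isTopologicalBasis_Ico.isOpen ⟨a, b, hab, rfl⟩
  · rw [Ico_eq_empty (not_lt.2 hba)]
    exact isOpen_empty

theorem exists_Ico_subset_of_isOpen {U : Set 𝕊} (hU : IsOpen U) {x : 𝕊} (hx : x ∈ U) :
    ∃ b, x < b ∧ Ico x b ⊆ U := by
  obtain ⟨_, ⟨a, b, -, rfl⟩, ⟨hax, hxb⟩, hsub⟩ :=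
    isTopologicalBasis_Ico.exists_subset_of_mem_open hx hU
  exact ⟨b, hxb, (Ico_subset_Ico_left hax).trans hsub⟩

end SorgenfreyLine

open SorgenfreyLine

theorem Perfect.not_countable {α : Type*} [MetricSpace α] [CompleteSpace α] {C : Set α}
    (hC : Perfect C) (hne : C.Nonempty) : ¬ C.Countable := by
  intro hcount
  obtain ⟨g, hgC, -, hg⟩ := hC.exists_nat_bool_injection hne
  have : Countable C := hcount.to_subtype
  have hcantor : Countable (ℕ → Bool) :=
    (Set.injective_codRestrict (fun t => hgC (mem_range_self t))).2 hg |>.countable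
  rw [← Cardinal.mk_le_aleph0_iff, ← Cardinal.power_def, Cardinal.mk_bool, Cardinal.mk_nat,
    Cardinal.two_power_aleph0] at hcantor
  exact Cardinal.aleph0_lt_continuum.not_ge hcantor

theorem Preperfect.exists_forall_Ioo_inter_nonempty {F : Set ℝ} (hF : Preperfect F)
    (hne : F.Nonempty) (hcl : IsClosed (X := 𝕊) F) :
    ∃ z ∈ F, ∀ w, z < w → (Ioo z w ∩ F).Nonempty := by
  obtain ⟨z, hzK, hz⟩ : ∃ z ∈ closure F, 𝓝[closure F ∩ Ioi z] z ≠ ⊥ := by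
    by_contra! h
    refine hF.perfect_closure.not_countable hne.closure
      ((countable_setOfPred_isolated_right_within (s := closure F)).mono fun z hz => ?_)
    exact ⟨hz, h z hz⟩
  have hright : ∀ w, z < w → (Ioo z w ∩ F).Nonempty := by
    intro w hzw
    rw [← neBot_iff, ← mem_closure_iff_nhdsWithin_neBot] at hz
    obtain ⟨t, htw, htK, hzt⟩ := mem_closure_iff_nhds.1 hz (Iio w) (Iio_mem_nhds hzw)
    exact mem_closure_iff.1 htK (Ioo z w) isOpen_Ioo ⟨hzt, htw⟩
  refine ⟨z, ?_, hright⟩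
  by_contra hzF
  obtain ⟨w, hzw, hw⟩ := exists_Ico_subset_of_isOpen hcl.isOpen_compl hzF
  obtain ⟨t, ht, htF⟩ := hright w hzw
  exact hw (Ioo_subset_Ico_self ht) htF

theorem preperfect_preimage_singleton_of_forall_notMem_Pab {X : Type*} {f : 𝕊 → X} {p : X}
    (hp : ∀ x ∈ f ⁻¹' {p}, ∀ a b : ℚ, x ∉ Pab f a b) : Preperfect (f ⁻¹' {p} : Set ℝ) := by
  intro x hx
  rw [accPt_iff_nhds]
  intro U hU
  obtain ⟨l, u, ⟨hlx, hxu⟩, hU⟩ := mem_nhds_iff_exists_Ioo_subset.1 hU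
  obtain ⟨a, hla, hax⟩ := exists_rat_btwn hlx
  obtain ⟨b, hxb, hbu⟩ := exists_rat_btwn hxu
  have : ¬ ∀ y ∈ Ico (a : 𝕊) b, f y = f x → y = x := fun h => hp x hx a b ⟨⟨hax.le, hxb⟩, h⟩
  push Not at this
  obtain ⟨y, ⟨hay, hyb⟩, hyx, hyne⟩ := this
  exact ⟨y, ⟨hU ⟨hla.trans_le hay, hyb.trans hbu⟩, hyx.trans hx⟩, hyne⟩

theorem secondCountableTopology_of_forall_fiber {X : Type*} [TopologicalSpace X] {f : 𝕊 → X}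
    (hf : Continuous f) (hopen : IsOpenMap f) {D : Set 𝕊} (hD : D.Countable)
    (hfib : ∀ p, ∃ z, f z = p ∧ (z ∈ D ∨ ∀ w, z < w → (Ioo z w ∩ f ⁻¹' {p}).Nonempty)) :
    SecondCountableTopology X := by
  set B := image2 (fun c (q : ℚ) => f '' Ico c q) (D ∪ range ((↑) : ℚ → 𝕊)) univ
  have hB : B.Countable := (hD.union (countable_range _)).image2 countable_univ _
  refine (isTopologicalBasis_of_isOpen_of_nhds ?_ fun p U hpU hU => ?_).secondCountableTopology hB
  · rintro _ ⟨c, -, q, -, rfl⟩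
    exact hopen _ (isOpen_Ico _ _)
  obtain ⟨z, rfl, hz⟩ := hfib p
  obtain ⟨b, hzb, hsub⟩ := exists_Ico_subset_of_isOpen (hU.preimage hf) hpU
  suffices ∃ c ∈ D ∪ range ((↑) : ℚ → 𝕊), ∃ q : ℚ, z ≤ c ∧ (q : 𝕊) ≤ b ∧ f z ∈ f '' Ico c q by
    obtain ⟨c, hc, q, hzc, hqb, hfz⟩ := this
    refine ⟨_, mem_image2_of_mem hc (mem_univ q), hfz, ?_⟩
    exact image_subset_iff.2 ((Ico_subset_Ico hzc hqb).trans hsub)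
  rcases hz with hzD | hright
  · obtain ⟨q, hzq, hqb⟩ := exists_rat_btwn (K := ℝ) hzb
    exact ⟨z, .inl hzD, q, le_rfl, hqb.le, mem_image_of_mem f ⟨le_rfl, hzq⟩⟩
  · obtain ⟨y, ⟨hzy, hyb⟩, hy⟩ := hright b hzb
    obtain ⟨q₁, hzq₁, hq₁y⟩ := exists_rat_btwn (K := ℝ) hzy
    obtain ⟨q₂, hyq₂, hq₂b⟩ := exists_rat_btwn (K := ℝ) hyb
    exact ⟨q₁, .inr ⟨q₁, rfl⟩, q₂, hzq₁.le, hq₂b.le, y, ⟨hq₁y.le, hyq₂⟩, hy⟩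

/-- If `f` is a continuous open surjection from the Sorgenfrey line onto a T1 space whose
weight is uncountable (not second countable), then `P_{a,b}` is uncountable for some rationals
`a < b`. -/
theorem stmt9 {X : Type} [TopologicalSpace X] [T1Space X] (f : 𝕊 → X)
    (hf : Continuous f) (hopen : IsOpenMap f) (hsurj : Surjective f)
    (hw : ¬ SecondCountableTopology X) :
    ∃ a b : ℚ, a < b ∧ ¬ (Pab f (a : 𝕊) (b : 𝕊)).Countable := by
  by_contra! hP
  set D := ⋃ (a : ℚ) (b : ℚ), Pab f a b
  have hD : D.Countable := by
    refine countable_iUnion fun a => countable_iUnion fun b => ?_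
    rcases lt_or_ge a b with hab | hba
    · exact hP a b hab
    · refine countable_empty.mono fun x hx => ?_
      exact (not_lt.2 ((Rat.cast_le (K := ℝ)).2 hba)) (hx.1.1.trans_lt hx.1.2)
  refine hw (secondCountableTopology_of_forall_fiber hf hopen hD fun p => ?_)
  by_cases hpD : ∃ z ∈ D, f z = p
  · obtain ⟨z, hzD, rfl⟩ := hpD
    exact ⟨z, rfl, .inl hzD⟩
  push Not at hpD
  obtain ⟨x, rfl⟩ := hsurj p
  have hpre : Preperfect (f ⁻¹' {f x} : Set ℝ) :=
    preperfect_preimage_singleton_of_forall_notMem_Pab fun y hy a b hyP =>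
      hpD y (mem_iUnion₂.2 ⟨a, b, hyP⟩) hy
  obtain ⟨z, hz, hright⟩ :=
    hpre.exists_forall_Ioo_inter_nonempty ⟨x, rfl⟩ (isClosed_singleton.preimage hf)
  exact ⟨z, hz, .inr hright⟩
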